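/- arXiv:1601.07388 — 7 statements merged into one kernel-verified Lean document; each statement's English description precedes it below -/
import Mathlib

section
/- Let i be a nonnegative integer and let f ∈ ℂ[∂, λ] be a polynomial in two commuting variables satisfying, as an identity in the polynomial ring ℂ[∂, λ, μ]: (∂ + λ + 2μ)·f(∂, λ) − (∂ + (i+2)μ)·f(∂+μ, λ) = ((i+1)∂ + (i+2)(λ+μ))·f(−λ−μ, λ). Then there exists a polynomial a ∈ ℂ[λ] such that (i+1)·f(∂, λ) = a(λ)·((i+1)∂ + (i+2)λ). -/
open MvPolynomial

/-- If `f ∈ ℂ[∂, λ]` satisfies the functional equation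
`(∂+λ+2μ)·f(∂,λ) − (∂+(i+2)μ)·f(∂+μ,λ) = ((i+1)∂+(i+2)(λ+μ))·f(−λ−μ,λ)` in
`ℂ[∂, λ, μ]`, then `(i+1)·f(∂,λ) = a(λ)·((i+1)∂+(i+2)λ)` for some `a ∈ ℂ[λ]`.
(Variables: in `Fin 2`, `X 0 = ∂`, `X 1 = λ`; in `Fin 3`, `X 0 = ∂`, `X 1 = λ`,
`X 2 = μ`.) -/
theorem conformal_derivation_on_J0 (i : ℕ) (f : MvPolynomial (Fin 2) ℂ)
    (h : (X 0 + X 1 + C 2 * X 2) *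
            (aeval ![(X 0 : MvPolynomial (Fin 3) ℂ), X 1] f) -
          (X 0 + C ((i : ℂ) + 2) * X 2) *
            (aeval ![(X 0 : MvPolynomial (Fin 3) ℂ) + X 2, X 1] f) =
        (C ((i : ℂ) + 1) * X 0 + C ((i : ℂ) + 2) * (X 1 + X 2)) *
          (aeval ![-(X 1 : MvPolynomial (Fin 3) ℂ) - X 2, X 1] f)) :
    ∃ a : Polynomial ℂ,
      C ((i : ℂ) + 1) * f =
        (Polynomial.aeval (X 1 : MvPolynomial (Fin 2) ℂ) a) *
          (C ((i : ℂ) + 1) * X 0 + C ((i : ℂ) + 2) * X 1) := by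
  classical
  set L : MvPolynomial (Fin 2) ℂ := C ((i:ℂ)+1) * X 0 + C ((i:ℂ)+2) * X 1 with hL
  -- the map μ ↦ 0
  set φ : MvPolynomial (Fin 3) ℂ →ₐ[ℂ] MvPolynomial (Fin 2) ℂ :=
    aeval ![X 0, X 1, 0] with hφ
  have key : ∀ v : Fin 2 → MvPolynomial (Fin 3) ℂ,
      φ (aeval v f) = aeval (fun j => φ (v j)) f := fun v => by
    rw [← AlgHom.comp_apply, comp_aeval]
  set p : Polynomial ℂ := aeval ![-Polynomial.X, Polynomial.X] f with hp
  set ψ : Polynomial ℂ →ₐ[ℂ] MvPolynomial (Fin 2) ℂ :=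
    Polynomial.aeval (X 1) with hψ
  have e1 : φ (aeval ![(X 0 : MvPolynomial (Fin 3) ℂ), X 1] f) = f := by
    rw [key]
    have : (fun j => φ (![(X 0 : MvPolynomial (Fin 3) ℂ), X 1] j)) = X := by
      funext j; fin_cases j <;> simp [hφ]
    rw [this, aeval_X_left_apply]
  have e2 : φ (aeval ![(X 0 : MvPolynomial (Fin 3) ℂ) + X 2, X 1] f) = f := by
    rw [key]
    have : (fun j => φ (![(X 0 : MvPolynomial (Fin 3) ℂ) + X 2, X 1] j)) = X := by
      funext j; fin_cases j <;> simp [hφ]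
    rw [this, aeval_X_left_apply]
  have e3 : φ (aeval ![-(X 1 : MvPolynomial (Fin 3) ℂ) - X 2, X 1] f) = ψ p := by
    have v3 : (fun j => φ (![-(X 1 : MvPolynomial (Fin 3) ℂ) - X 2, X 1] j))
        = ![-X 1, X 1] := by
      funext j; fin_cases j <;> simp [hφ]
    have v4 : (fun j => ψ (![-Polynomial.X, Polynomial.X] j))
        = ![-(X 1 : MvPolynomial (Fin 2) ℂ), X 1] := by
      funext j; fin_cases j <;> simp [hψ]
    rw [key, v3, hp, ← AlgHom.comp_apply, comp_aeval, v4]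
  have h0 : X 1 * f = L * ψ p := by
    have := congrArg φ h
    simp only [map_sub, map_mul, map_add, e1, e2, e3] at this
    have hX0 : φ (X 0 : MvPolynomial (Fin 3) ℂ) = X 0 := by simp [hφ]
    have hX1 : φ (X 1 : MvPolynomial (Fin 3) ℂ) = X 1 := by simp [hφ]
    have hX2 : φ (X 2 : MvPolynomial (Fin 3) ℂ) = 0 := by simp [hφ]
    have hC : ∀ c : ℂ, φ (C c) = C c := by intro c; simp [hφ, algHom_C]
    rw [hX0, hX1, hX2, hC, hC, hC] at this
    rw [hL]
    simp only [map_add, map_one, map_ofNat] at this ⊢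
    linear_combination this
  -- evaluate at λ = 0 to get p.coeff 0 = 0
  have hc0 : p.coeff 0 = 0 := by
    set χ : MvPolynomial (Fin 2) ℂ →ₐ[ℂ] MvPolynomial (Fin 2) ℂ :=
      aeval ![X 0, 0] with hχ
    have := congrArg χ h0
    rw [map_mul, map_mul] at this
    have hχ1 : χ (X 1) = 0 := by simp [hχ]
    have hχL : χ L = C ((i:ℂ)+1) * X 0 := by
      simp [hχ, hL, algHom_C]
    have hχψ : χ (ψ p) = C (p.coeff 0) := by
      rw [hψ, ← Polynomial.aeval_algHom_apply, hχ1, Polynomial.aeval_def,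
        Polynomial.eval₂_at_zero]
      rfl
    rw [hχ1, hχL, hχψ, zero_mul] at this
    have h1 : C (((i:ℂ)+1) * p.coeff 0) * (X 0 : MvPolynomial (Fin 2) ℂ) = 0 := by
      rw [map_mul, mul_right_comm]; exact this.symm
    have h2 : (((i:ℂ)+1) * p.coeff 0) = 0 := by
      by_contra hne
      exact (mul_ne_zero (C_ne_zero.mpr hne) (X_ne_zero 0)) h1
    have hi : ((i:ℂ)+1) ≠ 0 := by
      intro h0; exact Nat.succ_ne_zero i (by exact_mod_cast h0)
    exact (mul_eq_zero.mp h2).resolve_left hi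
  obtain ⟨a, ha⟩ : Polynomial.X ∣ p := Polynomial.X_dvd_iff.mpr hc0
  have hf : f = L * ψ a := by
    have hx1 : (X 1 : MvPolynomial (Fin 2) ℂ) ≠ 0 := X_ne_zero 1
    apply mul_left_cancel₀ hx1
    rw [h0, ha, map_mul]
    have : ψ Polynomial.X = X 1 := by simp [hψ]
    rw [this]; ring
  refine ⟨Polynomial.C ((i:ℂ)+1) * a, ?_⟩
  rw [map_mul, hf]
  have : (Polynomial.aeval (X 1 : MvPolynomial (Fin 2) ℂ)) (Polynomial.C ((i:ℂ)+1))
      = C ((i:ℂ)+1) := by simp [algebraMap_eq]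
  rw [this]
  show C ((i:ℂ)+1) * (L * ψ a) = C ((i:ℂ)+1) * ψ a * L
  ring
end

section
/- Let k and m be nonnegative integers and let f ∈ ℂ[∂, λ] be a polynomial in two commuting variables satisfying, as an identity in the polynomial ring ℂ[∂, λ, μ]: (∂ + λ + (k+2)μ)·f(∂, λ) = (∂ + (m+2)μ)·f(∂+μ, λ). Then f = 0. -/
open MvPolynomial

/-- If `f ∈ ℂ[∂, λ]` satisfies the functional equation
`(∂+λ+(k+2)μ)·f(∂,λ) = (∂+(m+2)μ)·f(∂+μ,λ)` in `ℂ[∂, λ, μ]`, then `f = 0`.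
(Variables: in `Fin 2`, `X 0 = ∂`, `X 1 = λ`; in `Fin 3`, `X 0 = ∂`, `X 1 = λ`,
`X 2 = μ`.) -/
theorem conformal_derivation_on_Jk (k m : ℕ) (f : MvPolynomial (Fin 2) ℂ)
    (h : (X 0 + X 1 + C ((k : ℂ) + 2) * X 2) *
            (aeval ![(X 0 : MvPolynomial (Fin 3) ℂ), X 1] f) =
          (X 0 + C ((m : ℂ) + 2) * X 2) *
            (aeval ![(X 0 : MvPolynomial (Fin 3) ℂ) + X 2, X 1] f)) :
    f = 0 := by
  have h0 := congrArg (aeval ![(X 0 : MvPolynomial (Fin 2) ℂ), X 1, 0]) h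
  have e1 : (fun i => aeval ![(X 0 : MvPolynomial (Fin 2) ℂ), X 1, 0]
      (![(X 0 : MvPolynomial (Fin 3) ℂ), X 1] i)) = X := by
    funext i; fin_cases i <;> simp
  have e2 : (fun i => aeval ![(X 0 : MvPolynomial (Fin 2) ℂ), X 1, 0]
      (![(X 0 : MvPolynomial (Fin 3) ℂ) + X 2, X 1] i)) = X := by
    funext i; fin_cases i <;> simp
  rw [map_mul, map_mul, comp_aeval_apply, comp_aeval_apply, e1, e2, aeval_X_left_apply] at h0
  simp only [map_add, map_mul, aeval_X, aeval_C, Matrix.cons_val_zero, Matrix.cons_val_one,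
    Matrix.head_cons, Matrix.cons_val_two, Matrix.tail_cons, mul_zero, add_zero] at h0
  have hx : (X 1 : MvPolynomial (Fin 2) ℂ) * f = 0 := by
    have := h0
    ring_nf at this ⊢
    linear_combination this
  rcases mul_eq_zero.mp hx with h' | h'
  · exact absurd h' (X_ne_zero 1)
  · exact h'
end

section
/- Let g ∈ ℂ[λ, ∂] be a polynomial in two commuting variables satisfying, as an identity in the polynomial ring ℂ[λ, μ, ∂]: g(λ, ∂)·g(μ, λ+∂) = g(μ, ∂)·g(λ, μ+∂). Then g does not depend on its second variable; that is, there exists a polynomial h ∈ ℂ[λ] such that g(λ, ∂) = h(λ). -/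
open MvPolynomial

noncomputable section RankOneAux

local notation "R2" => MvPolynomial (Fin 2) ℂ

private lemma aux_trans_of_algHom {A B : Type*} [CommRing A] [CommRing B] [Algebra ℂ A]
    [Algebra ℂ B] (f : A →ₐ[ℂ] B) {a : A} (h : Transcendental ℂ (f a)) :
    Transcendental ℂ a := by
  rw [transcendental_iff] at h ⊢
  intro p hp
  exact h p (by rw [Polynomial.aeval_algHom_apply, hp, map_zero])

private lemma aux_inj {c : R2} (hc : Transcendental ℂ c) :
    Function.Injective (aeval (R := ℂ) (fun _ : Fin 1 => c)) :=
  algebraicIndependent_iff_injective_aeval.mp (algebraicIndependent_unique_type_iff.mpr hc)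

private lemma aux_L1 {c : R2} (hc : Transcendental ℂ c) (g : MvPolynomial (Fin 2) ℂ) :
    (aeval ![(Polynomial.X : Polynomial R2), Polynomial.C c] g).natDegree = degreeOf 0 g ∧
      (g ≠ 0 → aeval ![(Polynomial.X : Polynomial R2), Polynomial.C c] g ≠ 0) := by
  have hinj : Function.Injective
      ⇑((aeval (R := ℂ) (fun _ : Fin 1 => c) : MvPolynomial (Fin 1) ℂ →ₐ[ℂ] R2) :
        MvPolynomial (Fin 1) ℂ →+* R2) := aux_inj hc
  have key : (Polynomial.mapAlgHom (aeval (R := ℂ) (fun _ : Fin 1 => c))).comp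
      ((finSuccEquiv ℂ 1).toAlgHom) = aeval ![(Polynomial.X : Polynomial R2), Polynomial.C c] := by
    apply algHom_ext
    intro i
    fin_cases i
    · simp [finSuccEquiv_X_zero]
    · have h1 : (X (1 : Fin 2) : MvPolynomial (Fin 2) ℂ) = X (Fin.succ 0) := rfl
      simp [h1, finSuccEquiv_X_succ]
  have keyg : aeval ![(Polynomial.X : Polynomial R2), Polynomial.C c] g
      = (finSuccEquiv ℂ 1 g).map ↑(aeval (R := ℂ) (fun _ : Fin 1 => c)) := by
    rw [← key]
    simp [Polynomial.coe_mapAlgHom]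
  constructor
  · rw [keyg, Polynomial.natDegree_map_eq_of_injective hinj, natDegree_finSuccEquiv]
  · intro hg h0
    rw [keyg] at h0
    have : finSuccEquiv ℂ 1 g = 0 := Polynomial.map_injective _ hinj (by simpa using h0)
    exact hg ((map_eq_zero_iff _ (finSuccEquiv ℂ 1).injective).mp this)

private lemma aux_L2 {c : R2} (hc : Transcendental ℂ c) (g : MvPolynomial (Fin 2) ℂ) :
    (aeval ![Polynomial.C c, (Polynomial.X : Polynomial R2)] g).natDegree = degreeOf 1 g ∧
      (g ≠ 0 → aeval ![Polynomial.C c, (Polynomial.X : Polynomial R2)] g ≠ 0) := by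
  have hswap : aeval ![Polynomial.C c, (Polynomial.X : Polynomial R2)] g
      = aeval ![(Polynomial.X : Polynomial R2), Polynomial.C c]
          (rename (Equiv.swap (0 : Fin 2) 1) g) := by
    rw [aeval_rename]
    have hv : (![(Polynomial.X : Polynomial R2), Polynomial.C c] ∘ (Equiv.swap (0 : Fin 2) 1))
        = ![Polynomial.C c, Polynomial.X] := by
      funext i
      fin_cases i <;> simp [Equiv.swap_apply_left, Equiv.swap_apply_right]
    rw [hv]
  have hdeg : degreeOf 0 (rename (Equiv.swap (0 : Fin 2) 1) g) = degreeOf 1 g := by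
    have := degreeOf_rename_of_injective (p := g)
      (Equiv.swap (0 : Fin 2) 1).injective (i := 1)
    simpa [Equiv.swap_apply_right] using this
  obtain ⟨h1, h2⟩ := aux_L1 hc (rename (Equiv.swap (0 : Fin 2) 1) g)
  refine ⟨by rw [hswap, h1, hdeg], fun hg => ?_⟩
  rw [hswap]
  refine h2 fun h0 => hg ?_
  exact rename_injective _ (Equiv.swap (0 : Fin 2) 1).injective
    (by rw [h0, map_zero] : rename _ g = rename _ 0)

private lemma aux_trans_add : Transcendental ℂ ((X 0 + X 1 : R2)) := by
  apply aux_trans_of_algHom (aeval (R := ℂ) ![X 0, (0 : R2)])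
  have : (aeval (R := ℂ) ![X 0, (0 : R2)]) (X 0 + X 1) = X 0 := by simp
  rw [this]
  exact MvPolynomial.transcendental_X ℂ 0

private lemma aux_taylor_ne_zero {r : R2} {p : Polynomial R2} (hp : p ≠ 0) :
    Polynomial.taylor r p ≠ 0 := by
  intro h0
  have := congrArg (Polynomial.taylor (-r)) h0
  rw [Polynomial.taylor_taylor, neg_add_cancel, Polynomial.taylor_zero, map_zero] at this
  exact hp this

end RankOneAux

/-- If `g ∈ ℂ[λ, ∂]` satisfies `g(λ,∂)·g(μ,λ+∂) = g(μ,∂)·g(λ,μ+∂)` in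
`ℂ[λ, μ, ∂]`, then `g` does not depend on its second variable: `g(λ,∂) = h(λ)`
for some `h ∈ ℂ[λ]`. (Variables: in `Fin 2`, `X 0 = λ`, `X 1 = ∂`; in `Fin 3`,
`X 0 = λ`, `X 1 = μ`, `X 2 = ∂`.) -/
theorem rank_one_module_action_constant (g : MvPolynomial (Fin 2) ℂ)
    (h : (aeval ![(X 0 : MvPolynomial (Fin 3) ℂ), X 2] g) *
            (aeval ![(X 1 : MvPolynomial (Fin 3) ℂ), X 0 + X 2] g) =
          (aeval ![(X 1 : MvPolynomial (Fin 3) ℂ), X 2] g) *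
            (aeval ![(X 0 : MvPolynomial (Fin 3) ℂ), X 1 + X 2] g)) :
    ∃ h : Polynomial ℂ, g = Polynomial.aeval (X 0 : MvPolynomial (Fin 2) ℂ) h := by
  classical
  by_cases hg : g = 0
  · exact ⟨0, by simp [hg]⟩
  -- notation
  have h1eq : (X (1 : Fin 3) : MvPolynomial (Fin 3) ℂ) = X (Fin.succ 0) := rfl
  have h2eq : (X (2 : Fin 3) : MvPolynomial (Fin 3) ℂ) = X (Fin.succ 1) := rfl
  have comp_eq : ∀ v : Fin 2 → MvPolynomial (Fin 3) ℂ,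
      (finSuccEquiv ℂ 2) (aeval v g) = aeval (fun i => finSuccEquiv ℂ 2 (v i)) g := by
    intro v
    exact DFunLike.congr_fun (comp_aeval (f := v) (finSuccEquiv ℂ 2).toAlgHom) g
  have H := congrArg (finSuccEquiv ℂ 2) h
  rw [map_mul, map_mul, comp_eq, comp_eq, comp_eq, comp_eq] at H
  have hwA : (fun i => finSuccEquiv ℂ 2 (![(X 0 : MvPolynomial (Fin 3) ℂ), X 2] i))
      = ![(Polynomial.X : Polynomial (MvPolynomial (Fin 2) ℂ)), Polynomial.C (X 1)] := by
    funext i; fin_cases i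
    · simp [finSuccEquiv_X_zero]
    · simp [h2eq, finSuccEquiv_X_succ]
  have hwB : (fun i => finSuccEquiv ℂ 2 (![(X 1 : MvPolynomial (Fin 3) ℂ), X 0 + X 2] i))
      = ![(Polynomial.C (X 0) : Polynomial (MvPolynomial (Fin 2) ℂ)),
          Polynomial.X + Polynomial.C (X 1)] := by
    funext i; fin_cases i
    · simp [h1eq, finSuccEquiv_X_succ]
    · simp [h2eq, finSuccEquiv_X_zero, finSuccEquiv_X_succ]
  have hwC : (fun i => finSuccEquiv ℂ 2 (![(X 1 : MvPolynomial (Fin 3) ℂ), X 2] i))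
      = ![(Polynomial.C (X 0) : Polynomial (MvPolynomial (Fin 2) ℂ)), Polynomial.C (X 1)] := by
    funext i; fin_cases i
    · simp [h1eq, finSuccEquiv_X_succ]
    · simp [h2eq, finSuccEquiv_X_succ]
  have hwD : (fun i => finSuccEquiv ℂ 2 (![(X 0 : MvPolynomial (Fin 3) ℂ), X 1 + X 2] i))
      = ![(Polynomial.X : Polynomial (MvPolynomial (Fin 2) ℂ)), Polynomial.C (X 0 + X 1)] := by
    funext i; fin_cases i
    · simp [finSuccEquiv_X_zero]
    · simp [h1eq, h2eq, finSuccEquiv_X_succ, map_add]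
  rw [hwA, hwB, hwC, hwD] at H
  -- identify pC with C g
  have hCg : aeval ![(Polynomial.C (X 0) : Polynomial (MvPolynomial (Fin 2) ℂ)),
      Polynomial.C (X 1)] g = Polynomial.C g := by
    have hcomp : ((IsScalarTower.toAlgHom ℂ (MvPolynomial (Fin 2) ℂ)
        (Polynomial (MvPolynomial (Fin 2) ℂ))).comp (aeval (X : Fin 2 → MvPolynomial (Fin 2) ℂ)))
        = aeval ![(Polynomial.C (X 0) : Polynomial (MvPolynomial (Fin 2) ℂ)),
            Polynomial.C (X 1)] := by
      apply algHom_ext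
      intro i
      fin_cases i <;> simp [Polynomial.algebraMap_eq]
    calc aeval ![(Polynomial.C (X 0) : Polynomial (MvPolynomial (Fin 2) ℂ)),
          Polynomial.C (X 1)] g
        = ((IsScalarTower.toAlgHom ℂ (MvPolynomial (Fin 2) ℂ)
            (Polynomial (MvPolynomial (Fin 2) ℂ))).comp
              (aeval (X : Fin 2 → MvPolynomial (Fin 2) ℂ))) g := by rw [hcomp]
      _ = Polynomial.C (aeval (X : Fin 2 → MvPolynomial (Fin 2) ℂ) g) := by
            simp [Polynomial.algebraMap_eq]
      _ = Polynomial.C g := by rw [aeval_X_left_apply]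
  -- identify pB as a taylor shift
  have hBt : aeval ![(Polynomial.C (X 0) : Polynomial (MvPolynomial (Fin 2) ℂ)),
      Polynomial.X + Polynomial.C (X 1)] g
      = Polynomial.taylor (X 1) (aeval ![(Polynomial.C (X 0) :
          Polynomial (MvPolynomial (Fin 2) ℂ)), Polynomial.X] g) := by
    rw [Polynomial.taylor_apply, Polynomial.comp_eq_aeval]
    have hcomp : ((Polynomial.aeval (Polynomial.X + Polynomial.C (X 1) :
        Polynomial (MvPolynomial (Fin 2) ℂ))).restrictScalars ℂ).comp
        (aeval ![(Polynomial.C (X 0) : Polynomial (MvPolynomial (Fin 2) ℂ)), Polynomial.X])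
        = aeval ![(Polynomial.C (X 0) : Polynomial (MvPolynomial (Fin 2) ℂ)),
            Polynomial.X + Polynomial.C (X 1)] := by
      apply algHom_ext
      intro i
      fin_cases i <;> simp [Polynomial.algebraMap_eq]
    rw [← hcomp]
    rfl
  -- degrees and nonvanishing
  obtain ⟨hA1, hA2⟩ := aux_L1 (MvPolynomial.transcendental_X ℂ (1 : Fin 2)) g
  obtain ⟨hB1, hB2⟩ := aux_L2 (MvPolynomial.transcendental_X ℂ (0 : Fin 2)) g
  obtain ⟨hD1, hD2⟩ := aux_L1 aux_trans_add g
  have hC0 : (Polynomial.C g : Polynomial (MvPolynomial (Fin 2) ℂ)) ≠ 0 :=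
    fun h0 => hg (by simpa using h0)
  rw [hCg, hBt] at H
  have hdegs := congrArg Polynomial.natDegree H
  rw [Polynomial.natDegree_mul (hA2 hg) (aux_taylor_ne_zero (hB2 hg)),
    Polynomial.natDegree_mul hC0 (hD2 hg), Polynomial.natDegree_taylor,
    Polynomial.natDegree_C, hA1, hB1, hD1] at hdegs
  have hn : degreeOf 1 g = 0 := by omega
  -- conclude
  have hnotmem : (1 : Fin 2) ∉ g.vars := by
    intro hi
    obtain ⟨d, hd, hd1⟩ := (mem_vars _).mp hi
    have hle := monomial_le_degreeOf (1 : Fin 2) hd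
    rw [hn] at hle
    rw [Finsupp.mem_support_iff] at hd1
    omega
  have hvars : (g.vars : Set (Fin 2)) ⊆ {0} := by
    intro i hi
    simp only [Finset.mem_coe] at hi
    fin_cases i
    · simp
    · exact absurd hi hnotmem
  have hsup : g ∈ supported ℂ ({0} : Set (Fin 2)) := mem_supported.mpr hvars
  rw [supported_eq_adjoin_X, Set.image_singleton,
    Algebra.adjoin_singleton_eq_range_aeval] at hsup
  obtain ⟨p, hp⟩ := hsup
  exact ⟨p, hp.symm⟩
end

section
/- Let c : ℤ≥0 × ℤ≥0 → ℂ be a family of complex numbers such that for all nonnegative integers i, j, k the following identity holds in the polynomial ring ℂ[λ₁, λ₂]: ((j+1)λ₁ − (i+1)λ₂)·c(i+j, k)·(λ₁+λ₂)^{i+j+k+3} = ((i+1)λ₂ + (i+k+2)λ₁)·c(i+k, j)·(−λ₂)^{i+j+k+3} − ((j+1)λ₁ + (j+k+2)λ₂)·c(j+k, i)·(−λ₁)^{i+j+k+3}. Then c(i, k) = 0 for every pair (i, k) with i + k ≥ 1. (Consequently, every reduced 2-cocycle of the Block type Lie conformal algebra B with trivial coefficients is, up to coboundary, a scalar multiple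 of the Virasoro cocycle supported on (J_0, J_0), so the reduced second cohomology H²(B, ℂ) is one-dimensional.) -/
open MvPolynomial

/-- If `c : ℤ≥0 × ℤ≥0 → ℂ` satisfies, for all `i j k`, the cocycle identity
`((j+1)λ₁ − (i+1)λ₂)·c(i+j,k)·(λ₁+λ₂)^{i+j+k+3}
  = ((i+1)λ₂ + (i+k+2)λ₁)·c(i+k,j)·(−λ₂)^{i+j+k+3}
    − ((j+1)λ₁ + (j+k+2)λ₂)·c(j+k,i)·(−λ₁)^{i+j+k+3}`
in `ℂ[λ₁, λ₂]`, then `c(i,k) = 0` whenever `i + k ≥ 1`.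
(Variables: `X 0 = λ₁`, `X 1 = λ₂`.) -/
theorem reduced_two_cocycle_constants_vanish (c : ℕ × ℕ → ℂ)
    (h : ∀ i j k : ℕ,
      (C ((j : ℂ) + 1) * X 0 - C ((i : ℂ) + 1) * X 1) * C (c (i + j, k)) *
          ((X 0 : MvPolynomial (Fin 2) ℂ) + X 1) ^ (i + j + k + 3) =
        (C ((i : ℂ) + 1) * X 1 + C ((i : ℂ) + (k : ℂ) + 2) * X 0) *
            C (c (i + k, j)) * (-(X 1 : MvPolynomial (Fin 2) ℂ)) ^ (i + j + k + 3) -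
          (C ((j : ℂ) + 1) * X 0 + C ((j : ℂ) + (k : ℂ) + 2) * X 1) *
            C (c (j + k, i)) * (-(X 0 : MvPolynomial (Fin 2) ℂ)) ^ (i + j + k + 3)) :
    ∀ i k : ℕ, 1 ≤ i + k → c (i, k) = 0 := by
  -- Main step: c (m, k) = 0 whenever 1 ≤ m.
  have main : ∀ m k : ℕ, 1 ≤ m → c (m, k) = 0 := by
    intro m k hm
    have hN : m + k + 3 ≠ 0 := by omega
    have e1 := congrArg (eval ![(1:ℂ),0]) (h 0 m k)
    have e2 := congrArg (eval ![(0:ℂ),1]) (h 0 m k)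
    have e3 := congrArg (eval ![(1:ℂ),1]) (h 0 m k)
    simp only [map_sub, map_add, map_mul, map_neg, map_pow, eval_C, eval_X,
      Matrix.cons_val_zero, Matrix.cons_val_one, Matrix.head_cons, Nat.cast_zero,
      zero_add, Nat.zero_add, neg_zero, zero_pow hN, one_pow, mul_zero, mul_one,
      zero_mul, add_zero, sub_zero, zero_sub] at e1 e2 e3
    set ε : ℂ := (-1:ℂ) ^ (m + k + 3) with hεdef
    have hε : ε * ε = 1 := by
      rw [hεdef, ← pow_add]; exact Even.neg_one_pow ⟨m + k + 3, rfl⟩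
    have hm1 : ((m:ℂ) + 1) ≠ 0 := by exact_mod_cast Nat.succ_ne_zero m
    -- ε * c(m+k,0) = - c(m,k)
    have hb : ε * c (m + k, 0) = - c (m, k) := by
      apply mul_left_cancel₀ hm1
      linear_combination e1
    have hd : ε * c (k, m) = - c (m, k) := by linear_combination -e2
    have key : (m : ℂ) * ((2:ℂ) ^ (m + k + 3) - 2) * c (m, k) = 0 := by
      linear_combination e3 + ((k:ℂ) + 3) * hd - (2*(m:ℂ) + (k:ℂ) + 3) * hb
    have h2 : ((2:ℂ) ^ (m + k + 3) - 2) ≠ 0 := by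
      have hn : (2:ℕ) ^ (m + k + 3) ≠ 2 := by
        have : (2:ℕ)^3 ≤ (2:ℕ) ^ (m + k + 3) := Nat.pow_le_pow_right (by norm_num) (by omega)
        omega
      intro hc
      apply hn
      have hcc : ((2^(m+k+3) : ℕ) : ℂ) = ((2:ℕ) : ℂ) := by push_cast; linear_combination hc
      exact_mod_cast hcc
    have hmne : (m : ℂ) ≠ 0 := by exact_mod_cast Nat.cast_ne_zero.mpr (by omega)
    have := mul_eq_zero.mp key
    rcases this with h' | h'
    · rcases mul_eq_zero.mp h' with h'' | h''
      · exact absurd h'' hmne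
      · exact absurd h'' h2
    · exact h'
  intro i k hik
  rcases Nat.eq_zero_or_pos i with hi | hi
  · subst hi
    have hk : 1 ≤ k := by omega
    have hN : k + 3 ≠ 0 := by omega
    have e2 := congrArg (eval ![(0:ℂ),1]) (h 0 0 k)
    simp only [map_sub, map_add, map_mul, map_neg, map_pow, eval_C, eval_X,
      Matrix.cons_val_zero, Matrix.cons_val_one, Matrix.head_cons, Nat.cast_zero,
      zero_add, Nat.zero_add, neg_zero, zero_pow hN, one_pow, mul_zero, mul_one,
      zero_mul, add_zero, sub_zero, zero_sub] at e2
    have h0 : c (k, 0) = 0 := main k 0 hk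
    rw [h0] at e2
    linear_combination -e2
  · exact main i k hi
end

section
/- Let k be an integer with k ≥ 1 and let c, d ∈ ℂ be complex numbers such that the following identity holds in the polynomial ring ℂ[λ₁, λ₂]: c·(λ₁ − λ₂)·(λ₁+λ₂)^{k+3} = d·((λ₂ + (k+2)λ₁)·(−λ₂)^{k+3} − (λ₁ + (k+2)λ₂)·(−λ₁)^{k+3}). Then c = 0 and d = 0. -/
open MvPolynomial

/-- If `k ≥ 1` and `c, d ∈ ℂ` satisfy
`c·(λ₁−λ₂)(λ₁+λ₂)^{k+3} = d·((λ₂+(k+2)λ₁)(−λ₂)^{k+3} − (λ₁+(k+2)λ₂)(−λ₁)^{k+3})`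
in `ℂ[λ₁, λ₂]`, then `c = 0` and `d = 0`.
(Variables: `X 0 = λ₁`, `X 1 = λ₂`.) -/
theorem cocycle_case_i_j_zero (k : ℕ) (hk : 1 ≤ k) (c d : ℂ)
    (h : C c * ((X 0 : MvPolynomial (Fin 2) ℂ) - X 1) * (X 0 + X 1) ^ (k + 3) =
        C d * ((X 1 + C ((k : ℂ) + 2) * X 0) * (-(X 1 : MvPolynomial (Fin 2) ℂ)) ^ (k + 3) -
          (X 0 + C ((k : ℂ) + 2) * X 1) * (-(X 0 : MvPolynomial (Fin 2) ℂ)) ^ (k + 3))) :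
    c = 0 ∧ d = 0 := by
  have e1 := congrArg (eval (![1, 0] : Fin 2 → ℂ)) h
  have e3 := congrArg (eval (![1, -1] : Fin 2 → ℂ)) h
  have e4 := congrArg (eval (![2, -1] : Fin 2 → ℂ)) h
  simp only [map_mul, map_sub, map_add, map_pow, map_neg, eval_C, eval_X,
    Matrix.cons_val_zero, Matrix.cons_val_one, Matrix.head_cons] at e1 e3 e4
  have hz : ((1 : ℂ) + -1) ^ (k + 3) = 0 := by
    rw [show ((1:ℂ) + -1) = 0 by ring, zero_pow (by omega)]
  have hz0 : (-(0 : ℂ)) ^ (k + 3) = 0 := by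
    rw [neg_zero, zero_pow (by omega)]
  have hnn : (-(-1 : ℂ)) ^ (k + 3) = 1 := by rw [neg_neg, one_pow]
  rw [hz] at e3
  rw [hnn] at e3 e4
  rw [hz0] at e1
  rcases Nat.even_or_odd (k + 3) with hpar | hpar
  · -- k + 3 even : (-1)^(k+3) = 1
    have h1 : (-1 : ℂ) ^ (k + 3) = 1 := hpar.neg_one_pow
    rw [h1] at e1 e3
    have hk1 : ((k : ℂ) + 1) ≠ 0 := Nat.cast_add_one_ne_zero k
    have e3' : d * ((k : ℂ) + 1) = 0 := by linear_combination (-1/2 : ℂ) * e3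
    have hd : d = 0 := by
      rcases mul_eq_zero.mp e3' with h' | h'
      · exact h'
      · exact absurd h' hk1
    refine ⟨?_, hd⟩
    rw [hd] at e1
    linear_combination e1
  · -- k + 3 odd : (-1)^(k+3) = -1
    have h1 : (-1 : ℂ) ^ (k + 3) = -1 := hpar.neg_one_pow
    have hn2 : (-2 : ℂ) ^ (k + 3) = -(2 : ℂ) ^ (k + 3) := by
      rw [show (-2 : ℂ) = (-1) * 2 by ring, mul_pow, h1]; ring
    rw [h1] at e1
    rw [hn2] at e4
    have e1' : c = d := by linear_combination e1
    rw [e1'] at e4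
    have e4' : d * ((k : ℂ) * ((2 : ℂ) ^ (k + 3) - 2)) = 0 := by linear_combination e4
    have hd : d = 0 := by
      rcases mul_eq_zero.mp e4' with h' | h'
      · exact h'
      · exfalso
        rcases mul_eq_zero.mp h' with h'' | h''
        · exact Nat.cast_ne_zero.mpr (by omega) h''
        · have hge : (2 : ℕ) ^ 4 ≤ 2 ^ (k + 3) := Nat.pow_le_pow_right (by norm_num) (by omega)
          have hne : ((2 : ℕ) ^ (k + 3) : ℂ) ≠ ((2 : ℕ) : ℂ) := by
            exact_mod_cast (by omega : (2 : ℕ) ^ (k + 3) ≠ 2)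
          apply hne
          push_cast
          linear_combination h''
    exact ⟨e1'.trans hd, hd⟩
end

section
/- Let i and k be nonnegative integers and let g ∈ ℂ[x, y] be a polynomial in two commuting variables satisfying, as an identity in the polynomial ring ℂ[λ₁, λ₂]: ((i+1)λ₁ − λ₂)·g(λ₁+λ₂, 0) + (k+1)λ₁·g(λ₂, λ₁) = 0. Then g = 0. -/
open MvPolynomial

lemma aeval_aeval_fin2 (f u : Fin 2 → MvPolynomial (Fin 2) ℂ)
    (g : MvPolynomial (Fin 2) ℂ) :
    aeval f (aeval u g) = aeval (fun j => aeval f (u j)) g := by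
  rw [← AlgHom.comp_apply, comp_aeval]

/-- If `g ∈ ℂ[x, y]` satisfies
`((i+1)λ₁ − λ₂)·g(λ₁+λ₂, 0) + (k+1)λ₁·g(λ₂, λ₁) = 0` in `ℂ[λ₁, λ₂]`,
then `g = 0`. (Variables: `X 0 = λ₁`, `X 1 = λ₂`.) -/
theorem basic_two_cocycle_vanishes (i k : ℕ) (g : MvPolynomial (Fin 2) ℂ)
    (h : (C ((i : ℂ) + 1) * X 0 - X 1) *
            (aeval ![(X 0 : MvPolynomial (Fin 2) ℂ) + X 1, 0] g) +
          C ((k : ℂ) + 1) * X 0 *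
            (aeval ![(X 1 : MvPolynomial (Fin 2) ℂ), X 0] g) = 0) :
    g = 0 := by
  set p := aeval ![(X 0 : MvPolynomial (Fin 2) ℂ) + X 1, 0] g with hp
  set q := aeval ![(X 1 : MvPolynomial (Fin 2) ℂ), X 0] g with hq
  set r := aeval ![(X 1 : MvPolynomial (Fin 2) ℂ), 0] g with hr
  -- substitute λ₁ := 0
  have h0 : (aeval ![(0 : MvPolynomial (Fin 2) ℂ), X 1])
      ((C ((i:ℂ) + 1) * X 0 - X 1) * p + C ((k:ℂ) + 1) * X 0 * q) = 0 := by
    rw [h]; simp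
  have hφp : (aeval ![(0 : MvPolynomial (Fin 2) ℂ), X 1]) p = r := by
    rw [hp, hr, aeval_aeval_fin2]
    have e : (fun j => aeval ![(0 : MvPolynomial (Fin 2) ℂ), X 1]
        (![(X 0 : MvPolynomial (Fin 2) ℂ) + X 1, 0] j))
        = ![(X 1 : MvPolynomial (Fin 2) ℂ), 0] := by
      funext j; fin_cases j <;> simp
    rw [e]
  have hφq : (aeval ![(0 : MvPolynomial (Fin 2) ℂ), X 1]) q = r := by
    rw [hq, hr, aeval_aeval_fin2]
    have e : (fun j => aeval ![(0 : MvPolynomial (Fin 2) ℂ), X 1]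
        (![(X 1 : MvPolynomial (Fin 2) ℂ), X 0] j))
        = ![(X 1 : MvPolynomial (Fin 2) ℂ), 0] := by
      funext j; fin_cases j <;> simp
    rw [e]
  simp only [map_add, map_mul, map_sub, aeval_X, Matrix.cons_val_zero, Matrix.cons_val_one,
    Matrix.head_cons] at h0
  rw [hφp, hφq] at h0
  simp only [mul_zero, zero_mul, add_zero, zero_sub, neg_mul, neg_eq_zero] at h0
  -- h0 : X 1 * r = 0
  have hrz : r = 0 := by
    rcases mul_eq_zero.mp h0 with h' | h'
    · exact absurd h' (X_ne_zero 1)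
    · exact h'
  have hpz : p = 0 := by
    have e2 : (aeval ![(X 0 : MvPolynomial (Fin 2) ℂ), X 0 + X 1]) r = p := by
      rw [hr, hp, aeval_aeval_fin2]
      have e : (fun j => aeval ![(X 0 : MvPolynomial (Fin 2) ℂ), X 0 + X 1]
          (![(X 1 : MvPolynomial (Fin 2) ℂ), 0] j))
          = ![(X 0 : MvPolynomial (Fin 2) ℂ) + X 1, 0] := by
        funext j; fin_cases j <;> simp
      rw [e]
    rw [← e2, hrz, map_zero]
  rw [hpz, mul_zero, zero_add] at h
  have hqz : q = 0 := by
    rcases mul_eq_zero.mp h with h' | h'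
    · rcases mul_eq_zero.mp h' with h'' | h''
      · exact absurd (C_eq_zero.mp h'') (Nat.cast_add_one_ne_zero k)
      · exact absurd h'' (X_ne_zero 0)
    · exact h'
  have e3 : (aeval ![(X 1 : MvPolynomial (Fin 2) ℂ), X 0]) q = g := by
    rw [hq, aeval_aeval_fin2]
    have e : (fun j => aeval ![(X 1 : MvPolynomial (Fin 2) ℂ), X 0]
        (![(X 1 : MvPolynomial (Fin 2) ℂ), X 0] j)) = X := by
      funext j; fin_cases j <;> simp
    rw [e, aeval_X_left_apply]
  rw [← e3, hqz, map_zero]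
end

section
/- Let i be a nonnegative integer, let γ ∈ ℂ[x] be a polynomial in one variable, and let φ ∈ ℂ[λ₁, λ₂] be a polynomial in two commuting variables such that, as an identity in ℂ[λ₁, λ₂]: ((i+1)λ₁ − λ₂)·γ(λ₁+λ₂) = −(λ₁+λ₂)·φ(λ₁, λ₂). Then x divides γ, i.e., γ(0) = 0. Moreover, if φ = 0 then γ = 0. -/
open MvPolynomial

/-- If `γ ∈ ℂ[x]` and `φ ∈ ℂ[λ₁, λ₂]` satisfy
`((i+1)λ₁ − λ₂)·γ(λ₁+λ₂) = −(λ₁+λ₂)·φ(λ₁, λ₂)` in `ℂ[λ₁, λ₂]`, then `x ∣ γ`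
(i.e., `γ(0) = 0`); moreover, if `φ = 0` then `γ = 0`.
(Variables: `X 0 = λ₁`, `X 1 = λ₂`.) -/
theorem one_cochain_divisibility (i : ℕ) (γ : Polynomial ℂ)
    (φ : MvPolynomial (Fin 2) ℂ)
    (h : (C ((i : ℂ) + 1) * X 0 - X 1) *
            (Polynomial.aeval ((X 0 : MvPolynomial (Fin 2) ℂ) + X 1) γ) =
          -((X 0 : MvPolynomial (Fin 2) ℂ) + X 1) * φ) :
    (Polynomial.X ∣ γ ∧ γ.eval 0 = 0) ∧ (φ = 0 → γ = 0) := by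
  have key : γ.eval 0 = 0 := by
    have := congrArg (MvPolynomial.aeval (R := ℂ)
      (fun j : Fin 2 => if j = 0 then (Polynomial.X : Polynomial ℂ) else -Polynomial.X)) h
    simp only [map_mul, map_sub, map_add, map_neg, MvPolynomial.aeval_X, aeval_C] at this
    rw [← Polynomial.aeval_algHom_apply] at this
    norm_num at this
    rcases this with h1 | h1
    · exfalso
      have h2 := congrArg (fun p : Polynomial ℂ => p.coeff 1) h1
      simp [Polynomial.coeff_X] at h2
      norm_cast at h2
    · rw [← Polynomial.coeff_zero_eq_eval_zero]
      have h2 : (Polynomial.C (γ.coeff 0) : Polynomial ℂ) = 0 := by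
        simpa [Polynomial.aeval_def, Polynomial.eval₂_at_zero,
          Polynomial.algebraMap_eq] using h1
      exact_mod_cast Polynomial.C_eq_zero.mp h2
  refine ⟨⟨Polynomial.X_dvd_iff.2 (by rwa [Polynomial.coeff_zero_eq_eval_zero]), key⟩, ?_⟩
  intro hφ
  subst hφ
  have := congrArg (MvPolynomial.aeval (R := ℂ)
    (fun j : Fin 2 => if j = 0 then (Polynomial.X : Polynomial ℂ) else 0)) h
  simp only [map_mul, map_sub, map_add, map_neg, MvPolynomial.aeval_X, aeval_C, mul_zero,
    map_zero] at this
  rw [← Polynomial.aeval_algHom_apply] at this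
  norm_num at this
  rcases this with h1 | h1
  · exact absurd h1 (Nat.cast_add_one_ne_zero i)
  · exact h1
end
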